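/- arXiv:cs/0301010 — 3 statements merged into one kernel-verified Lean document; each statement's English description precedes it below -/
import Mathlib

section
/- For any propositional disjunctive logic program P, the well-founded disjunctive hypothesis WFDH(P) is self-consistent (it does not attack itself), and consequently WFDS(P) = WFDH(P) ∪ cons_P(WFDH(P)) is a consistent model state. -/
open scoped Classical

namespace DLP

/-- A (propositional) rule `a₁ ∨ ⋯ ∨ aₙ ← b₁, …, bₘ, not c₁, …, not cₜ`,
with head atoms `head`, positive body atoms `bodyPos` and (default-)negated
body atoms `bodyNeg` (heads and bodies are sets of literals). -/
structure Rule (Atom : Type) where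
  head : Finset Atom
  bodyPos : Finset Atom
  bodyNeg : Finset Atom

/-- A pure disjunction: a (positive) disjunction of atoms, or a (negative)
disjunction of default-negated atoms. -/
inductive PDisj (Atom : Type) where
  | pos : Finset Atom → PDisj Atom
  | neg : Finset Atom → PDisj Atom

/-- The atoms occurring in a pure disjunction. -/
def PDisj.atomsOf {Atom : Type} : PDisj Atom → Finset Atom
  | .pos A => A
  | .neg A => A

/-- Sub-disjunction relation between pure disjunctions (same polarity). -/
def SubDisj {Atom : Type} : PDisj Atom → PDisj Atom → Prop
  | .pos A, .pos B => A ⊆ B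
  | .neg A, .neg B => A ⊆ B
  | .pos _, .neg _ => False
  | .neg _, .pos _ => False

/-- A disjunctive logic program: a set of rules (over a finite atom alphabet,
so every program is finite). -/
abbrev Program (Atom : Type) := Set (Rule Atom)

variable {Atom : Type} [Fintype Atom] [DecidableEq Atom]

/-- Well-formedness: every rule head is nonempty (n > 0). -/
def IsProgram (P : Program Atom) : Prop := ∀ r ∈ P, r.head.Nonempty

/-- The atoms occurring in rule heads of `P`. -/
def heads (P : Program Atom) : Set Atom := {a | ∃ r ∈ P, a ∈ r.head}

/-- Closure of a set of pure disjunctions under super-disjunctions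
(model states are assumed closed under implication of pure disjunctions). -/
def stClosure (S : Set (PDisj Atom)) : Set (PDisj Atom) := {d' | ∃ d ∈ S, SubDisj d d'}

/-- A model state: a set of (nonempty) pure disjunctions closed under
super-disjunctions. -/
def IsModelState (S : Set (PDisj Atom)) : Prop :=
  (∀ d ∈ S, (PDisj.atomsOf d).Nonempty) ∧ ∀ d ∈ S, ∀ d', SubDisj d d' → d' ∈ S

/-- Consistency of a model state. -/
def ConsistentState (S : Set (PDisj Atom)) : Prop :=
  (¬ ∃ A : Finset Atom, A.Nonempty ∧ PDisj.pos A ∈ S ∧ ∀ a ∈ A, PDisj.neg {a} ∈ S) ∧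
  (¬ ∃ A : Finset Atom, A.Nonempty ∧ PDisj.neg A ∈ S ∧ ∀ a ∈ A, PDisj.pos {a} ∈ S)

/-! ### Classical inference for (positive) programs -/

/-- An interpretation `I` satisfies a rule (read classically). -/
def SatisfiesRule (I : Set Atom) (r : Rule Atom) : Prop :=
  ((↑r.bodyPos : Set Atom) ⊆ I ∧ ∀ c ∈ r.bodyNeg, c ∉ I) → ∃ a ∈ r.head, a ∈ I

/-- Classical propositional entailment of a positive disjunction from a program. -/
def Entails (P : Program Atom) (A : Finset Atom) : Prop :=
  ∀ I : Set Atom, (∀ r ∈ P, SatisfiesRule I r) → ∃ a ∈ A, a ∈ I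

/-- The least model state of a positive program: all entailed positive disjunctions. -/
def msState (P : Program Atom) : Set (Finset Atom) := {A | A.Nonempty ∧ Entails P A}

/-- Canonical form: the minimal disjunctions of `S`. -/
def canonical (S : Set (Finset Atom)) : Set (Finset Atom) := {A | A ∈ S ∧ ¬ ∃ A' ∈ S, A' ⊂ A}

/-! ### Argumentation: hypotheses, support, attack, WFDS -/

/-- A hypothesis: a set of (nonempty) negative disjunctions, each represented
by its finite set of atoms. -/
def IsHyp (Δ : Set (Finset Atom)) : Prop := ∀ D ∈ Δ, D.Nonempty

/-- The reduct `P⁺_Δ` of `P` with respect to a hypothesis `Δ`. -/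
def reduct (P : Program Atom) (Δ : Set (Finset Atom)) : Program Atom :=
  {r' | ∃ r ∈ P, (∀ c ∈ r.bodyNeg, ({c} : Finset Atom) ∈ Δ) ∧
    r' = ⟨r.head, r.bodyPos, ∅⟩}

/-- `Δ ⊢_P A`: `Δ` is a supporting hypothesis for the positive disjunction `A`. -/
def Supports (P : Program Atom) (Δ : Set (Finset Atom)) (A : Finset Atom) : Prop :=
  ∃ B : Finset Atom, (∀ b ∈ B, ({b} : Finset Atom) ∈ Δ) ∧
    A ∪ B ∈ canonical (msState (reduct P Δ))

/-- Attack relation, parameterized by a support relation `sup`. -/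
def AttacksWith (sup : Set (Finset Atom) → Finset Atom → Prop)
    (Δ Δ' : Set (Finset Atom)) : Prop :=
  (∃ β ∈ Δ', β.Nonempty ∧ ∀ b ∈ β, sup Δ {b}) ∨
  (∃ B : Finset Atom, B.Nonempty ∧ (∀ b ∈ B, ({b} : Finset Atom) ∈ Δ') ∧ sup Δ B)

/-- The assumption `not a` is admissible with respect to `Δ`. -/
def AdmissibleWith (sup : Set (Finset Atom) → Finset Atom → Prop)
    (Δ : Set (Finset Atom)) (a : Atom) : Prop :=
  ∀ Δ' : Set (Finset Atom), IsHyp Δ' →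
    AttacksWith sup Δ' {({a} : Finset Atom)} → AttacksWith sup Δ Δ'

/-- The operator `A_P`. -/
def AOpWith (sup : Set (Finset Atom) → Finset Atom → Prop)
    (Δ : Set (Finset Atom)) : Set (Finset Atom) :=
  {D | D.Nonempty ∧ ∃ a ∈ D, AdmissibleWith sup Δ a}

/-- The well-founded disjunctive hypothesis: least fixpoint of `A_P`
(obtained by iteration from the empty hypothesis). -/
def WFDHWith (sup : Set (Finset Atom) → Finset Atom → Prop) : Set (Finset Atom) :=
  ⋃ k : ℕ, (AOpWith sup)^[k] ∅

/-- The induced well-founded model state `WFDH ∪ cons(WFDH)`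
(closed under super-disjunctions). -/
def WFDSWith (sup : Set (Finset Atom) → Finset Atom → Prop) : Set (PDisj Atom) :=
  stClosure ({d | ∃ D ∈ WFDHWith sup, d = PDisj.neg D} ∪
    {d | ∃ A : Finset Atom, A.Nonempty ∧ sup (WFDHWith sup) A ∧ d = PDisj.pos A})

/-- The attack relation `⇝_P` of `P`. -/
def Attacks (P : Program Atom) : Set (Finset Atom) → Set (Finset Atom) → Prop :=
  AttacksWith (Supports P)

/-- `WFDH(P)`. -/
def WFDH (P : Program Atom) : Set (Finset Atom) := WFDHWith (Supports P)

/-- `WFDS(P)`, the argumentation-based well-founded semantics. -/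
def WFDS (P : Program Atom) : Set (PDisj Atom) := WFDSWith (Supports P)

/-! ### The hyperresolution operator `T^S` and the alternative semantics WFDS' -/

/-- The immediate consequence operator `T_Q^S` of a positive program `Q`. -/
def TS (Q : Program Atom) (J : Set (Finset Atom)) : Set (Finset Atom) :=
  {A | ∃ r ∈ Q, ∃ f : Atom → Finset Atom,
    (∀ b ∈ r.bodyPos, insert b (f b) ∈ J) ∧ A = r.head ∪ r.bodyPos.biUnion f}

/-- `T_Q^S ↑ ω`. -/
def TSomega (Q : Program Atom) : Set (Finset Atom) := ⋃ k : ℕ, (TS Q)^[k] ∅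

/-- `Δ ⊢'_P A`: support via the fixpoint of the hyperresolution operator. -/
def Supports' (P : Program Atom) (Δ : Set (Finset Atom)) (A : Finset Atom) : Prop :=
  ∃ B : Finset Atom, (∀ b ∈ B, ({b} : Finset Atom) ∈ Δ) ∧
    A ∪ B ∈ TSomega (reduct P Δ)

/-- `WFDS'(P)`: as `WFDS(P)` but with `⊢_P` replaced by `⊢'_P` throughout. -/
def WFDS' (P : Program Atom) : Set (PDisj Atom) := WFDSWith (Supports' P)

/-! ### Program transformations -/

/-- `r'` is an implication of `r`. -/
def Implication (r' r : Rule Atom) : Prop :=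
  r.head ⊆ r'.head ∧ r.bodyPos ⊆ r'.bodyPos ∧ r.bodyNeg ⊆ r'.bodyNeg ∧
    (r.head ⊂ r'.head ∨ r.bodyPos ⊂ r'.bodyPos ∨ r.bodyNeg ⊂ r'.bodyNeg)

/-- `r'` is an s-implication of `r`: `r' ≠ r` and either `r'` is an implication of `r`,
or `r` can be obtained from `r'` by changing some negative body literals of `r'`
into head atoms and possibly removing some body literals. -/
def SImplication (r' r : Rule Atom) : Prop :=
  r' ≠ r ∧ (Implication r' r ∨
    ∃ V ⊆ r'.bodyNeg, r.head = r'.head ∪ V ∧ r.bodyPos ⊆ r'.bodyPos ∧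
      r.bodyNeg ⊆ r'.bodyNeg \ V)

/-- Unfolding. -/
def Unfolding (P1 P2 : Program Atom) : Prop :=
  ∃ r ∈ P1, ∃ b ∈ r.bodyPos,
    P2 = (P1 \ {r}) ∪
      {r'' | ∃ r' ∈ P1, b ∈ r'.head ∧
        r'' = ⟨r.head ∪ r'.head.erase b, r.bodyPos.erase b ∪ r'.bodyPos,
               r.bodyNeg ∪ r'.bodyNeg⟩}

/-- Elimination of tautologies. -/
def ElimTaut (P1 P2 : Program Atom) : Prop :=
  ∃ r ∈ P1, (r.head ∩ r.bodyPos).Nonempty ∧ P2 = P1 \ {r}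

/-- Elimination of s-implications. -/
def ElimSImpl (P1 P2 : Program Atom) : Prop :=
  ∃ r' ∈ P1, (∃ r ∈ P1, SImplication r' r) ∧ P2 = P1 \ {r'}

/-- Elimination of nonminimal rules. -/
def ElimNonmin (P1 P2 : Program Atom) : Prop :=
  ∃ r' ∈ P1, (∃ r ∈ P1, r' ≠ r ∧ Implication r' r) ∧ P2 = P1 \ {r'}

/-- Positive reduction. -/
def PosRed (P1 P2 : Program Atom) : Prop :=
  ∃ r ∈ P1, ∃ c ∈ r.bodyNeg, c ∉ heads P1 ∧
    P2 = (P1 \ {r}) ∪ {(⟨r.head, r.bodyPos, r.bodyNeg.erase c⟩ : Rule Atom)}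

/-- Negative reduction. -/
def NegRed (P1 P2 : Program Atom) : Prop :=
  ∃ r ∈ P1, (∃ r' ∈ P1, r'.bodyPos = ∅ ∧ r'.bodyNeg = ∅ ∧ r'.head ⊆ r.bodyNeg) ∧
    P2 = P1 \ {r}

/-! ### BD-semantics and the transformation-based semantics -/

/-- An (abstract) BD-semantics. -/
structure BDSemantics (Atom : Type) [Fintype Atom] [DecidableEq Atom] where
  sem : Program Atom → Set (PDisj Atom)
  nonempty_mem : ∀ P : Program Atom, IsProgram P → ∀ d ∈ sem P, (PDisj.atomsOf d).Nonempty
  closed : ∀ P : Program Atom, IsProgram P → ∀ d ∈ sem P, ∀ d', SubDisj d d' → d' ∈ sem P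
  fact_mem : ∀ P : Program Atom, IsProgram P → ∀ r ∈ P, r.bodyPos = ∅ → r.bodyNeg = ∅ →
    PDisj.pos r.head ∈ sem P
  neg_mem : ∀ P : Program Atom, IsProgram P → ∀ a : Atom, a ∉ heads P →
    PDisj.neg {a} ∈ sem P

/-- A BD-semantics `S` allows (is invariant under) a program transformation `T`. -/
def Allows (S : BDSemantics Atom) (T : Program Atom → Program Atom → Prop) : Prop :=
  ∀ P1 P2 : Program Atom, IsProgram P1 → IsProgram P2 → T P1 P2 → S.sem P1 = S.sem P2

/-- `S` allows all program transformations in `T*_WFS`. -/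
def AllowsStar (S : BDSemantics Atom) : Prop :=
  Allows S Unfolding ∧ Allows S ElimTaut ∧ Allows S ElimSImpl ∧
    Allows S PosRed ∧ Allows S NegRed

/-- `S` allows all program transformations in `T_WFS`. -/
def AllowsWFSset (S : BDSemantics Atom) : Prop :=
  Allows S Unfolding ∧ Allows S ElimTaut ∧ Allows S ElimNonmin ∧
    Allows S PosRed ∧ Allows S NegRed

/-- `D-WFS*`: the weakest BD-semantics allowing all transformations in `T*_WFS`. -/
def DWFSstar (P : Program Atom) : Set (PDisj Atom) :=
  ⋂ S ∈ {S : BDSemantics Atom | AllowsStar S}, S.sem P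

/-- `D-WFS`: the weakest BD-semantics allowing all transformations in `T_WFS`. -/
def DWFS (P : Program Atom) : Set (PDisj Atom) :=
  ⋂ S ∈ {S : BDSemantics Atom | AllowsWFSset S}, S.sem P

/-! ### The least fixpoint transformation and the strong residual program -/

/-- The generalized consequence operator `T_P^G` on sets of conditional facts. -/
def TG (P : Program Atom) (J : Set (Rule Atom)) : Set (Rule Atom) :=
  {C | ∃ r ∈ P, ∃ hf : Atom → Finset Atom, ∃ bf : Atom → Finset Atom,
    (∀ b ∈ r.bodyPos, (⟨insert b (hf b), ∅, bf b⟩ : Rule Atom) ∈ J) ∧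
    C = ⟨r.head ∪ r.bodyPos.biUnion hf, ∅, r.bodyNeg ∪ r.bodyPos.biUnion bf⟩}

/-- The least fixpoint transformation `Lft(P) = T_P^G ↑ ω`, a negative program. -/
def Lft (P : Program Atom) : Program Atom := ⋃ k : ℕ, (TG P)^[k] ∅

/-- The strong reduction operator `R*` on negative programs. -/
noncomputable def Rstar (N : Program Atom) : Program Atom :=
  {r' | ∃ r ∈ N, (¬ ∃ r'' ∈ N, SImplication r r'') ∧
    r' = ⟨r.head, r.bodyPos, r.bodyNeg.filter (fun c => c ∈ heads N)⟩}

/-- The strong residual program `res*(P)`: the fixpoint reached by iterating `R*`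
starting from `Lft(P)`. -/
noncomputable def resStar (P : Program Atom) : Program Atom :=
  if h : ∃ k : ℕ, Rstar ((Rstar (Atom := Atom))^[k] (Lft P)) = (Rstar (Atom := Atom))^[k] (Lft P)
  then (Rstar (Atom := Atom))^[Nat.find h] (Lft P)
  else ∅

/-! ### Unfounded sets -/

/-- `body(r)` is true with respect to the model state `S`. -/
def BodyTrue (S : Set (PDisj Atom)) (r : Rule Atom) : Prop :=
  (∀ b ∈ r.bodyPos, PDisj.pos {b} ∈ S) ∧ (∀ c ∈ r.bodyNeg, PDisj.neg {c} ∈ S)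

/-- `body(r)` is false with respect to the model state `S`. -/
def BodyFalse (S : Set (PDisj Atom)) (r : Rule Atom) : Prop :=
  (∃ b ∈ r.bodyPos, PDisj.neg {b} ∈ S) ∨ (∃ c ∈ r.bodyNeg, PDisj.pos {c} ∈ S) ∨
  (∃ A : Finset Atom, A.Nonempty ∧ A ⊆ r.bodyNeg ∧ PDisj.pos A ∈ S)

/-- `X` is an unfounded set for `P` with respect to the model state `S`. -/
def Unfounded (P : Program Atom) (S : Set (PDisj Atom)) (X : Set Atom) : Prop :=
  ∀ a ∈ X, ∀ r ∈ P, a ∈ r.head →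
    BodyFalse S r ∨ (∃ x ∈ X, x ∈ r.bodyPos) ∨
    (BodyTrue S r → ∃ A : Finset Atom, A.Nonempty ∧ (↑A : Set Atom) ⊆ (↑r.head : Set Atom) \ X ∧
      PDisj.pos A ∈ S)

/-- The candidate greatest unfounded set: the union of all unfounded sets
(it is the greatest unfounded set exactly when it is itself unfounded). -/
def UP (P : Program Atom) (S : Set (PDisj Atom)) : Set Atom := ⋃₀ {X | Unfounded P S X}

/-- The operator `T_P` on model states. -/
def TPop (P : Program Atom) (S : Set (PDisj Atom)) : Set (Finset Atom) :=
  {A | A.Nonempty ∧ ∃ r ∈ P, BodyTrue S r ∧ A ⊆ r.head ∧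
    ∀ a ∈ r.head, a ∉ A → PDisj.neg {a} ∈ S}

/-- The operator `W_P(S) = T_P(S) ∪ not.U_P(S)`. -/
def WP (P : Program Atom) (S : Set (PDisj Atom)) : Set (PDisj Atom) :=
  {d | ∃ A ∈ TPop P S, d = PDisj.pos A} ∪ {d | ∃ p ∈ UP P S, d = PDisj.neg ({p} : Finset Atom)}

/-- The sequence `W_0 = ∅`, `W_k = W_P(W_{k-1})`. -/
def Wseq (P : Program Atom) (k : ℕ) : Set (PDisj Atom) := (WP P)^[k] ∅

/-- `U-WFS(P)`: the least fixpoint of `W_P` (closed under super-disjunctions). -/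
def UWFS (P : Program Atom) : Set (PDisj Atom) := stClosure (⋃ k : ℕ, Wseq P k)


end DLP

/-!
Support is not monotone in the hypothesis: enlarging `Δ` enlarges the reduct and may shrink its
canonical disjunctions. Still, a disjunction supported by `Δ ⊆ Γ` keeps a nonempty part supported
by `Γ` unless `Γ` attacks itself, so attacks and admissibility pass to self-consistent supersets
and `A_P` is monotone on them. By induction the iterates of `A_P` from `∅` increase and are
self-consistent, the key step being that a self-consistent `Δ ⊆ A_P(Δ)` supports no disjunction
of atoms admissible with respect to `Δ`. Since an attack involves only finitely many negative
disjunctions, self-consistency passes to the union `WFDH(P)`, and the consistency of `WFDS(P)`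
merely restates it.
-/

namespace DLP

variable {Atom : Type}

section Support

variable {P : Program Atom} {Δ Δ₁ Δ₂ : Set (Finset Atom)} {A : Finset Atom}

theorem exists_subset_mem_canonical {α : Type} {S : Set (Finset α)} {A : Finset α} (hA : A ∈ S) :
    ∃ D ⊆ A, D ∈ canonical S := by
  obtain ⟨D, hDA, hD⟩ := exists_minimal_le_of_wellFoundedLT (· ∈ S) A hA
  exact ⟨D, hDA, hD.prop, fun ⟨_, hA', hlt⟩ => hD.not_prop_of_lt hlt hA'⟩

theorem msState_mono {Q₁ Q₂ : Program Atom} (h : Q₁ ⊆ Q₂) : msState Q₁ ⊆ msState Q₂ :=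
  fun _ hA => ⟨hA.1, fun I hI => hA.2 I fun r hr => hI r (h hr)⟩

theorem reduct_mono (P : Program Atom) (h : Δ₁ ⊆ Δ₂) : reduct P Δ₁ ⊆ reduct P Δ₂ := by
  rintro _ ⟨r, hr, hneg, rfl⟩
  exact ⟨r, hr, fun c hc => h (hneg c hc), rfl⟩

variable [DecidableEq Atom]

theorem Supports.of_superset {D : Finset Atom} (h : Supports P Δ D) (hAD : A ⊆ D)
    (hrest : ∀ d ∈ D, d ∉ A → ({d} : Finset Atom) ∈ Δ) : Supports P Δ A := by
  obtain ⟨B, hB, hcan⟩ := h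
  refine ⟨B ∪ D \ A, ?_, ?_⟩
  · simp only [Finset.mem_union, Finset.mem_sdiff]
    rintro x (hx | ⟨hxD, hxA⟩)
    exacts [hB x hx, hrest x hxD hxA]
  · rwa [← Finset.union_assoc, Finset.union_right_comm, Finset.union_sdiff_of_subset hAD]

theorem Supports.exists_of_subset (h : Supports P Δ₁ A) (h₁₂ : Δ₁ ⊆ Δ₂) :
    ∃ D : Finset Atom, D.Nonempty ∧ (∀ d ∈ D, d ∈ A ∨ ({d} : Finset Atom) ∈ Δ₁) ∧
      Supports P Δ₂ D := by
  obtain ⟨B, hB, hcan⟩ := h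
  obtain ⟨D, hDAB, hD⟩ :=
    exists_subset_mem_canonical (msState_mono (reduct_mono P h₁₂) hcan.1)
  refine ⟨D, hD.1.1, fun d hd => ?_, ∅, by simp, by simpa using hD⟩
  rcases Finset.mem_union.1 (hDAB hd) with hdA | hdB
  exacts [Or.inl hdA, Or.inr (hB d hdB)]

theorem Supports.transfer (h : Supports P Δ₁ A) (h₁₂ : Δ₁ ⊆ Δ₂) :
    (∃ A' ⊆ A, A'.Nonempty ∧ Supports P Δ₂ A') ∨ Attacks P Δ₂ Δ₂ := by
  obtain ⟨D, hDne, hDA, hD⟩ := h.exists_of_subset h₁₂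
  by_cases hDA' : (D ∩ A).Nonempty
  · refine Or.inl ⟨D ∩ A, Finset.inter_subset_right, hDA',
      hD.of_superset Finset.inter_subset_left fun d hd hdA => ?_⟩
    rcases hDA d hd with h | h
    exacts [absurd (Finset.mem_inter.2 ⟨hd, h⟩) hdA, h₁₂ h]
  · refine Or.inr (Or.inr ⟨D, hDne, fun d hd => ?_, hD⟩)
    rcases hDA d hd with h | h
    exacts [absurd ⟨d, Finset.mem_inter.2 ⟨hd, h⟩⟩ hDA', h₁₂ h]

end Support

section Attack

theorem AttacksWith.mono_right {sup : Set (Finset Atom) → Finset Atom → Prop}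
    {Δ Δ₁ Δ₂ : Set (Finset Atom)} (ha : AttacksWith sup Δ Δ₁) (h : Δ₁ ⊆ Δ₂) :
    AttacksWith sup Δ Δ₂ := by
  rcases ha with ⟨β, hβ, hne, hs⟩ | ⟨B, hne, hmem, hs⟩
  exacts [Or.inl ⟨β, h hβ, hne, hs⟩, Or.inr ⟨B, hne, fun b hb => h (hmem b hb), hs⟩]

theorem AttacksWith.exists_le_of_iUnion {sup : Set (Finset Atom) → Finset Atom → Prop}
    {Δ : Set (Finset Atom)} {Γ : ℕ → Set (Finset Atom)} (hΓ : Monotone Γ)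
    (ha : AttacksWith sup Δ (⋃ k, Γ k)) : ∃ k, AttacksWith sup Δ (Γ k) := by
  rcases ha with ⟨β, hβ, hne, hs⟩ | ⟨B, hne, hmem, hs⟩
  · obtain ⟨k, hk⟩ := Set.mem_iUnion.1 hβ
    exact ⟨k, Or.inl ⟨β, hk, hne, hs⟩⟩
  · choose! f hf using fun b hb => Set.mem_iUnion.1 (hmem b hb)
    exact ⟨B.sup f, Or.inr ⟨B, hne, fun b hb => hΓ (Finset.le_sup hb) (hf b hb), hs⟩⟩

variable [DecidableEq Atom] {P : Program Atom} {Δ Δ₁ Δ₂ Δ' Γ : Set (Finset Atom)}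

theorem attacks_singleton_of_supports {a : Atom} (h : Supports P Δ {a}) :
    Attacks P Δ {({a} : Finset Atom)} :=
  Or.inr ⟨{a}, Finset.singleton_nonempty a, by simp, h⟩

theorem Attacks.exists_supports_of_self (h : Attacks P Γ Γ) :
    ∃ β ∈ Γ, β.Nonempty ∧ ∀ a ∈ β, Supports P Γ {a} := by
  rcases h with ⟨β, hβ, hne, hs⟩ | ⟨B, ⟨b, hb⟩, hmem, hs⟩
  · exact ⟨β, hβ, hne, hs⟩
  · refine ⟨{b}, hmem b hb, Finset.singleton_nonempty b, fun a ha => ?_⟩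
    rw [Finset.mem_singleton.1 ha]
    exact hs.of_superset (Finset.singleton_subset_iff.2 hb) fun d hd _ => hmem d hd

theorem Attacks.lift (h : Attacks P Δ₁ Δ') (h₁₂ : Δ₁ ⊆ Δ₂) :
    Attacks P Δ₂ Δ' ∨ Attacks P Δ₂ Δ₂ := by
  by_cases hself : Attacks P Δ₂ Δ₂
  · exact Or.inr hself
  refine Or.inl ?_
  rcases h with ⟨β, hβ, hne, hs⟩ | ⟨B, hne, hmem, hs⟩
  · refine Or.inl ⟨β, hβ, hne, fun b hb => ?_⟩
    obtain ⟨A', hA', hA'ne, hA'sup⟩ := ((hs b hb).transfer h₁₂).resolve_right hself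
    rwa [(Finset.subset_singleton_iff.1 hA').resolve_left hA'ne.ne_empty] at hA'sup
  · obtain ⟨B', hB', hB'ne, hB'sup⟩ := (hs.transfer h₁₂).resolve_right hself
    exact Or.inr ⟨B', hB'ne, fun b hb => hmem b (hB' hb), hB'sup⟩

theorem Attacks.self_of_subset (h : Attacks P Δ Δ') (hΔ : Δ ⊆ Γ) (hΔ' : Δ' ⊆ Γ) :
    Attacks P Γ Γ :=
  (h.lift hΔ).elim (fun h => AttacksWith.mono_right h hΔ') id

end Attack

section Admissible

theorem isHyp_aOpWith (sup : Set (Finset Atom) → Finset Atom → Prop) (Δ : Set (Finset Atom)) :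
    IsHyp (AOpWith sup Δ) :=
  fun _ hD => hD.1

variable [DecidableEq Atom] {P : Program Atom} {Δ Γ : Set (Finset Atom)}

theorem AdmissibleWith.mono {a : Atom} (h : AdmissibleWith (Supports P) Δ a) (hΔΓ : Δ ⊆ Γ)
    (hΓ : ¬ Attacks P Γ Γ) : AdmissibleWith (Supports P) Γ a :=
  fun Δ' hΔ' hatk => (Attacks.lift (h Δ' hΔ' hatk) hΔΓ).resolve_right hΓ

theorem aOpWith_mono (hΔΓ : Δ ⊆ Γ) (hΓ : ¬ Attacks P Γ Γ) :
    AOpWith (Supports P) Δ ⊆ AOpWith (Supports P) Γ := by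
  rintro D ⟨hne, a, ha, hadm⟩
  exact ⟨hne, a, ha, hadm.mono hΔΓ hΓ⟩

theorem not_attacks_union_singletons (hΔ : ¬ Attacks P Δ Δ) (C : Finset Atom)
    (hC : ∀ Y ⊆ C, Y.Nonempty → ¬ Supports P Δ Y) :
    ¬ Attacks P Δ (Δ ∪ (fun x => ({x} : Finset Atom)) '' C) := by
  rintro (⟨β, hβ, hne, hs⟩ | ⟨E, hEne, hEmem, hEsup⟩)
  · rcases hβ with hβ | ⟨x, hx, rfl⟩
    · exact hΔ (Or.inl ⟨β, hβ, hne, hs⟩)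
    · exact hC {x} (Finset.singleton_subset_iff.2 hx) (Finset.singleton_nonempty x)
        (hs x (Finset.mem_singleton_self x))
  · set Y := E.filter fun e => ({e} : Finset Atom) ∉ Δ
    have hYC : Y ⊆ C := by
      intro y hy
      obtain ⟨hyE, hyΔ⟩ := Finset.mem_filter.1 hy
      exact Finset.singleton_injective.mem_set_image.1 ((hEmem y hyE).resolve_left hyΔ)
    by_cases hY : Y.Nonempty
    · refine hC Y hYC hY (hEsup.of_superset (Finset.filter_subset _ _) fun e he heY => ?_)
      by_contra heΔ
      exact heY (Finset.mem_filter.2 ⟨he, heΔ⟩)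
    · refine hΔ (Or.inr ⟨E, hEne, fun e he => ?_, hEsup⟩)
      by_contra heΔ
      exact hY ⟨e, Finset.mem_filter.2 ⟨he, heΔ⟩⟩

/-- If `Δ ⊢ B`, then `Δ' := Δ ∪ not.(B \ {b})` supports a single atom admissible w.r.t. `Δ`, so
`Δ` attacks `Δ'`; but by induction `Δ` supports no nonempty proper part of `B`, and then it cannot
attack `Δ'`. -/
theorem not_supports_of_admissible (hΔ : ¬ Attacks P Δ Δ) (hpost : Δ ⊆ AOpWith (Supports P) Δ)
    (B : Finset Atom) (hB : B.Nonempty) (hadm : ∀ b ∈ B, AdmissibleWith (Supports P) Δ b) :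
    ¬ Supports P Δ B := by
  induction B using Finset.strongInduction with
  | H B ih =>
  intro hsup
  obtain ⟨b, hb⟩ := hB
  set Δ' := Δ ∪ (fun x => ({x} : Finset Atom)) '' ↑(B.erase b)
  have hΔΔ' : Δ ⊆ Δ' := Set.subset_union_left
  have hnot : ¬ Attacks P Δ Δ' :=
    not_attacks_union_singletons hΔ _ fun Y hY hYne =>
      ih Y (hY.trans_ssubset (Finset.erase_ssubset hb)) hYne fun y hy =>
        hadm y (Finset.mem_of_mem_erase (hY hy))
  have hΔ'hyp : IsHyp Δ' := by
    rintro D (hD | ⟨x, _, rfl⟩)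
    exacts [(hpost hD).1, Finset.singleton_nonempty x]
  obtain ⟨D, ⟨d, hd⟩, hDB, hD⟩ := hsup.exists_of_subset hΔΔ'
  obtain ⟨y, hyD, hy⟩ : ∃ y ∈ D, ∀ z ∈ D, z ≠ y → z ≠ b := by
    by_cases hbD : b ∈ D
    · exact ⟨b, hbD, fun _ _ => id⟩
    · exact ⟨d, hd, fun z hz _ hzb => hbD (hzb ▸ hz)⟩
  have hsupy : Supports P Δ' {y} := by
    refine hD.of_superset (Finset.singleton_subset_iff.2 hyD) fun z hz hzy => ?_
    rcases hDB z hz with hzB | hzΔ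
    · exact Or.inr ⟨z, Finset.mem_erase.2 ⟨hy z hz (by simpa using hzy), hzB⟩, rfl⟩
    · exact hΔΔ' hzΔ
  have hyadm : AdmissibleWith (Supports P) Δ y := by
    rcases hDB y hyD with hyB | hyΔ
    · exact hadm y hyB
    · obtain ⟨-, a, ha, hadm⟩ := hpost hyΔ
      rwa [Finset.mem_singleton.1 ha] at hadm
  exact hnot (hyadm Δ' hΔ'hyp (attacks_singleton_of_supports hsupy))

theorem not_attacks_aOpWith (hΔ : ¬ Attacks P Δ Δ) (hpost : Δ ⊆ AOpWith (Supports P) Δ) :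
    ¬ Attacks P Δ (AOpWith (Supports P) Δ) := by
  rintro (⟨β, ⟨-, a, ha, hadm⟩, -, hs⟩ | ⟨B, hBne, hBmem, hBsup⟩)
  · exact hΔ (hadm Δ (fun D hD => (hpost hD).1) (attacks_singleton_of_supports (hs a ha)))
  · refine not_supports_of_admissible hΔ hpost B hBne (fun b hb => ?_) hBsup
    obtain ⟨-, a, ha, hadm⟩ := hBmem b hb
    rwa [Finset.mem_singleton.1 ha] at hadm

theorem not_attacks_self_aOpWith (hΔ : ¬ Attacks P Δ Δ) (hpost : Δ ⊆ AOpWith (Supports P) Δ) :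
    ¬ Attacks P (AOpWith (Supports P) Δ) (AOpWith (Supports P) Δ) := by
  intro h
  obtain ⟨β, ⟨-, a, ha, hadm⟩, -, hs⟩ := h.exists_supports_of_self
  exact not_attacks_aOpWith hΔ hpost
    (hadm _ (isHyp_aOpWith _ Δ) (attacks_singleton_of_supports (hs a ha)))

end Admissible

section WellFounded

theorem isHyp_wfdhWith (sup : Set (Finset Atom) → Finset Atom → Prop) : IsHyp (WFDHWith sup) := by
  intro D hD
  obtain ⟨n, hn⟩ := Set.mem_iUnion.1 hD
  cases n with
  | zero => exact absurd hn (Set.notMem_empty D)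
  | succ n =>
    rw [Function.iterate_succ_apply'] at hn
    exact isHyp_aOpWith sup _ D hn

variable [DecidableEq Atom] (P : Program Atom)

theorem iterate_aOpWith_subset_succ_and_not_attacks_self (n : ℕ) :
    (AOpWith (Supports P))^[n] ∅ ⊆ (AOpWith (Supports P))^[n + 1] ∅ ∧
      ¬ Attacks P ((AOpWith (Supports P))^[n] ∅) ((AOpWith (Supports P))^[n] ∅) := by
  induction n with
  | zero =>
    refine ⟨Set.empty_subset _, ?_⟩
    rintro (⟨β, hβ, -⟩ | ⟨B, ⟨b, hb⟩, hmem, -⟩)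
    exacts [hβ, hmem b hb]
  | succ n ih =>
    obtain ⟨hsub, hsc⟩ := ih
    simp only [Function.iterate_succ_apply'] at hsub ⊢
    have hsc' := not_attacks_self_aOpWith hsc hsub
    exact ⟨aOpWith_mono hsub hsc', hsc'⟩

theorem monotone_iterate_aOpWith : Monotone fun n => (AOpWith (Supports P))^[n] ∅ :=
  monotone_nat_of_le_succ fun n => (iterate_aOpWith_subset_succ_and_not_attacks_self P n).1

theorem not_attacks_self_wfdh : ¬ Attacks P (WFDH P) (WFDH P) := by
  intro h
  obtain ⟨β, hβ, -, hs⟩ := h.exists_supports_of_self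
  obtain ⟨n, hn⟩ := Set.mem_iUnion.1 hβ
  cases n with
  | zero => exact absurd hn (Set.notMem_empty β)
  | succ n =>
    rw [Function.iterate_succ_apply'] at hn
    obtain ⟨-, a, ha, hadm⟩ := hn
    have hatk := hadm _ (isHyp_wfdhWith _) (attacks_singleton_of_supports (hs a ha))
    obtain ⟨k, hk⟩ := AttacksWith.exists_le_of_iUnion (monotone_iterate_aOpWith P) hatk
    exact (iterate_aOpWith_subset_succ_and_not_attacks_self P (max n k)).2
      (Attacks.self_of_subset hk (monotone_iterate_aOpWith P (le_max_left n k))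
        (monotone_iterate_aOpWith P (le_max_right n k)))

end WellFounded

section ModelState

theorem SubDisj.trans {d₁ d₂ d₃ : PDisj Atom} (h₁₂ : SubDisj d₁ d₂) (h₂₃ : SubDisj d₂ d₃) :
    SubDisj d₁ d₃ := by
  cases d₁ <;> cases d₂ <;> cases d₃ <;>
    first | exact h₁₂.elim | exact h₂₃.elim | exact Finset.Subset.trans h₁₂ h₂₃

theorem SubDisj.atomsOf_subset {d d' : PDisj Atom} (h : SubDisj d d') : d.atomsOf ⊆ d'.atomsOf := by
  cases d <;> cases d' <;> first | exact h | exact h.elim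

theorem isModelState_stClosure {S : Set (PDisj Atom)} (hS : ∀ d ∈ S, d.atomsOf.Nonempty) :
    IsModelState (stClosure S) :=
  ⟨fun _ ⟨d, hd, hdd'⟩ => (hS d hd).mono hdd'.atomsOf_subset,
    fun _ ⟨d₀, hd₀, h₀⟩ _ h => ⟨d₀, hd₀, h₀.trans h⟩⟩

variable (sup : Set (Finset Atom) → Finset Atom → Prop)

theorem pos_mem_wfdsWith_iff {A : Finset Atom} :
    PDisj.pos A ∈ WFDSWith sup ↔ ∃ A₀ ⊆ A, A₀.Nonempty ∧ sup (WFDHWith sup) A₀ := by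
  constructor
  · rintro ⟨_, ⟨D, -, rfl⟩ | ⟨A₀, hne, hs, rfl⟩, hsub⟩
    exacts [hsub.elim, ⟨A₀, hsub, hne, hs⟩]
  · rintro ⟨A₀, hsub, hne, hs⟩
    exact ⟨_, Or.inr ⟨A₀, hne, hs, rfl⟩, hsub⟩

theorem neg_mem_wfdsWith_iff {A : Finset Atom} :
    PDisj.neg A ∈ WFDSWith sup ↔ ∃ D ∈ WFDHWith sup, D ⊆ A := by
  constructor
  · rintro ⟨_, ⟨D, hD, rfl⟩ | ⟨A₀, -, -, rfl⟩, hsub⟩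
    exacts [⟨D, hD, hsub⟩, hsub.elim]
  · rintro ⟨D, hD, hsub⟩
    exact ⟨_, Or.inl ⟨D, hD, rfl⟩, hsub⟩

theorem isModelState_wfdsWith : IsModelState (WFDSWith sup) := by
  refine isModelState_stClosure ?_
  rintro _ (⟨D, hD, rfl⟩ | ⟨A, hA, -, rfl⟩)
  exacts [isHyp_wfdhWith sup D hD, hA]

theorem consistentState_wfdsWith (hsc : ¬ AttacksWith sup (WFDHWith sup) (WFDHWith sup)) :
    ConsistentState (WFDSWith sup) := by
  have singleton_of_subset {D : Finset Atom} {a : Atom} (hD : D.Nonempty) (h : D ⊆ {a}) :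
      D = {a} := (Finset.subset_singleton_iff.1 h).resolve_left hD.ne_empty
  refine ⟨?_, ?_⟩
  · rintro ⟨A, -, hpos, hneg⟩
    obtain ⟨A₀, hA₀A, hA₀ne, hA₀⟩ := (pos_mem_wfdsWith_iff sup).1 hpos
    refine hsc (Or.inr ⟨A₀, hA₀ne, fun a ha => ?_, hA₀⟩)
    obtain ⟨D, hD, hDa⟩ := (neg_mem_wfdsWith_iff sup).1 (hneg a (hA₀A ha))
    rwa [← singleton_of_subset (isHyp_wfdhWith sup D hD) hDa]
  · rintro ⟨A, -, hneg, hpos⟩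
    obtain ⟨D, hD, hDA⟩ := (neg_mem_wfdsWith_iff sup).1 hneg
    refine hsc (Or.inl ⟨D, hD, isHyp_wfdhWith sup D hD, fun a ha => ?_⟩)
    obtain ⟨A₀, hA₀a, hA₀ne, hA₀⟩ := (pos_mem_wfdsWith_iff sup).1 (hpos a (hDA ha))
    rwa [← singleton_of_subset hA₀ne hA₀a]

end ModelState

theorem wfdh_selfConsistent_wfds_consistent_general
    {Atom : Type} [DecidableEq Atom]
    (P : Program Atom) :
    ¬ Attacks P (WFDH P) (WFDH P) ∧
    IsModelState (WFDS P) ∧ ConsistentState (WFDS P) :=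
  ⟨not_attacks_self_wfdh P, isModelState_wfdsWith _,
    consistentState_wfdsWith _ (not_attacks_self_wfdh P)⟩

/-- For any propositional disjunctive logic program `P`, the well-founded
disjunctive hypothesis `WFDH(P)` is self-consistent (it does not attack itself), and
consequently `WFDS(P) = WFDH(P) ∪ cons_P(WFDH(P))` is a consistent model state. -/
theorem wfdh_selfConsistent_wfds_consistent
    {Atom : Type} [Fintype Atom] [DecidableEq Atom]
    (P : Program Atom) (hP : IsProgram P) :
    ¬ Attacks P (WFDH P) (WFDH P) ∧
    IsModelState (WFDS P) ∧ ConsistentState (WFDS P) :=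
  wfdh_selfConsistent_wfds_consistent_general P

end DLP
end

section
/- The class of BD-semantics allowing all program transformations in T*_WFS is nonempty, and the mapping D-WFS* defined by D-WFS*(P) = ⋂{S(P) : S is a BD-semantics allowing all transformations in T*_WFS} is itself a BD-semantics allowing all transformations in T*_WFS; hence D-WFS* is well-defined as the weakest BD-semantics allowing T*_WFS. -/
open scoped Classical

namespace DLP

variable {Atom : Type} [Fintype Atom] [DecidableEq Atom]

/-- The trivial BD-semantics: all pure disjunctions over a nonempty atom set. -/
def trivialSem (Atom : Type) [Fintype Atom] [DecidableEq Atom] : BDSemantics Atom where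
  sem := fun _ => {d | (PDisj.atomsOf d).Nonempty}
  nonempty_mem := fun _ _ d hd => hd
  closed := by
    intro P _ d hd d' hsub
    cases d <;> cases d' <;> simp_all [SubDisj, PDisj.atomsOf, Set.mem_setOf_eq]
    · exact hd.mono hsub
    · exact hd.mono hsub
  fact_mem := fun P hP r hr _ _ => hP r hr
  neg_mem := fun _ _ a _ => Finset.singleton_nonempty a

theorem trivialSem_allowsStar (Atom : Type) [Fintype Atom] [DecidableEq Atom] :
    AllowsStar (trivialSem Atom) := by
  refine ⟨?_, ?_, ?_, ?_, ?_⟩ <;> intro P1 P2 _ _ _ <;> rfl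

theorem mem_DWFSstar {Atom : Type} [Fintype Atom] [DecidableEq Atom]
    {P : Program Atom} {d : PDisj Atom} :
    d ∈ DWFSstar P ↔ ∀ S : BDSemantics Atom, AllowsStar S → d ∈ S.sem P := by
  simp [DWFSstar]

theorem dwfsStar_wellDefined
    {Atom : Type} [Fintype Atom] [DecidableEq Atom] :
    (∃ S : BDSemantics Atom, AllowsStar S) ∧
    (∃ S0 : BDSemantics Atom,
      (∀ P : Program Atom, S0.sem P = DWFSstar P) ∧ AllowsStar S0) ∧
    (∀ S : BDSemantics Atom, AllowsStar S →
      ∀ P : Program Atom, DWFSstar P ⊆ S.sem P) := by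
  refine ⟨⟨trivialSem Atom, trivialSem_allowsStar Atom⟩, ?_, ?_⟩
  · refine ⟨⟨DWFSstar, ?_, ?_, ?_, ?_⟩, fun P => rfl, ?_, ?_, ?_, ?_, ?_⟩
    · intro P hP d hd
      exact (trivialSem Atom).nonempty_mem P hP d
        (mem_DWFSstar.mp hd _ (trivialSem_allowsStar Atom))
    · intro P hP d hd d' hsub
      exact mem_DWFSstar.mpr fun S hS =>
        S.closed P hP d (mem_DWFSstar.mp hd S hS) d' hsub
    · intro P hP r hr h1 h2
      exact mem_DWFSstar.mpr fun S hS => S.fact_mem P hP r hr h1 h2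
    · intro P hP a ha
      exact mem_DWFSstar.mpr fun S hS => S.neg_mem P hP a ha
    all_goals
      intro P1 P2 h1 h2 hT
      ext d
      simp only [mem_DWFSstar]
      constructor <;> intro h S hS
    · exact (hS.1 P1 P2 h1 h2 hT) ▸ h S hS
    · exact (hS.1 P1 P2 h1 h2 hT) ▸ h S hS
    · exact (hS.2.1 P1 P2 h1 h2 hT) ▸ h S hS
    · exact (hS.2.1 P1 P2 h1 h2 hT) ▸ h S hS
    · exact (hS.2.2.1 P1 P2 h1 h2 hT) ▸ h S hS
    · exact (hS.2.2.1 P1 P2 h1 h2 hT) ▸ h S hS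
    · exact (hS.2.2.2.1 P1 P2 h1 h2 hT) ▸ h S hS
    · exact (hS.2.2.2.1 P1 P2 h1 h2 hT) ▸ h S hS
    · exact (hS.2.2.2.2 P1 P2 h1 h2 hT) ▸ h S hS
    · exact (hS.2.2.2.2 P1 P2 h1 h2 hT) ▸ h S hS
  · intro S hS P d hd
    exact mem_DWFSstar.mp hd S hS

end DLP
end

section
/- For any propositional disjunctive logic program P, any hypothesis Δ ⊆ DB_P^−, and any positive disjunction α ∈ DB_P^+: Δ ⊢_P α if and only if Δ ⊢_{Lft(P)} α, where Lft(P) is the least fixpoint transformation of P. -/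
open scoped Classical

namespace DLP

variable {Atom : Type} [Fintype Atom] [DecidableEq Atom]

/-!
Under a hypothesis `Δ`, call a conditional fact of `Lft P` assumed when `Δ` contains its
negative body. Both `P⁺_Δ` and `(Lft P)⁺_Δ` entail exactly the positive disjunctions that
contain the head of an assumed fact, so the two reducts have the same least model state and
hence support the same disjunctions. For `(Lft P)⁺_Δ`, a set of facts, this is immediate. For
`P⁺_Δ`, soundness of `T_P^G` is an induction along its iteration; completeness is the
completeness of hyperresolution: if no assumed head lies inside a disjunction `A`, a minimal
set of atoms outside `A` meeting every assumed head is a model of `P⁺_Δ`, because resolving a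
rule against facts whose heads meet that set in a single body atom yields another assumed fact.
-/

section LeastFixpointTransformation

variable {Atom : Type}

def Assumes (Δ : Set (Finset Atom)) (r : Rule Atom) : Prop :=
  ∀ c ∈ r.bodyNeg, ({c} : Finset Atom) ∈ Δ

lemma entails_reduct_iff_of_bodyPos_eq_empty {N : Program Atom}
    (hN : ∀ C ∈ N, C.bodyPos = ∅) (Δ : Set (Finset Atom)) (A : Finset Atom) :
    Entails (reduct N Δ) A ↔ ∃ C ∈ N, Assumes Δ C ∧ C.head ⊆ A := by
  constructor
  · intro h
    by_contra! hcon
    obtain ⟨a, haA, ha⟩ := h {a | a ∉ A} (by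
      rintro _ ⟨C, hC, hΔC, rfl⟩ -
      exact Finset.not_subset.mp (hcon C hC hΔC))
    exact ha haA
  · rintro ⟨C, hC, hΔC, hCA⟩ I hI
    obtain ⟨a, ha, haI⟩ := hI _ ⟨C, hC, hΔC, rfl⟩ ⟨by simp [hN C hC], by simp⟩
    exact ⟨a, hCA ha, haI⟩

variable [DecidableEq Atom]

lemma TG_mono (P : Program Atom) : Monotone (TG P) := by
  rintro J J' h C ⟨r, hr, hf, bf, hfacts, rfl⟩
  exact ⟨r, hr, hf, bf, fun b hb => h (hfacts b hb), rfl⟩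

lemma monotone_iterate_TG (P : Program Atom) : Monotone fun k => (TG P)^[k] ∅ :=
  (TG_mono P).monotone_iterate_of_le_map (Set.empty_subset _)

lemma bodyPos_eq_empty_of_mem_Lft {P : Program Atom} {C : Rule Atom} (hC : C ∈ Lft P) :
    C.bodyPos = ∅ := by
  obtain ⟨k, hk⟩ := Set.mem_iUnion.mp hC
  cases k with
  | zero => simp at hk
  | succ k =>
    rw [Function.iterate_succ_apply'] at hk
    obtain ⟨r, -, hf, bf, -, rfl⟩ := hk
    rfl

lemma TG_Lft_subset (P : Program Atom) : TG P (Lft P) ⊆ Lft P := by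
  rintro C ⟨r, hr, hf, bf, hfacts, rfl⟩
  obtain ⟨k, hk⟩ :=
    (monotone_iterate_TG P).directed_le.exists_mem_subset_of_finset_subset_biUnion
      (s := r.bodyPos.image fun b => (⟨insert b (hf b), ∅, bf b⟩ : Rule Atom))
      (by simpa [Set.subset_def] using fun b hb => Set.mem_iUnion.mp (hfacts b hb))
  refine Set.mem_iUnion.mpr ⟨k + 1, ?_⟩
  rw [Function.iterate_succ_apply']
  exact ⟨r, hr, hf, bf, fun b hb => hk (Finset.mem_coe.mpr (Finset.mem_image_of_mem _ hb)),
    rfl⟩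

/-- Hyperresolution of `r` against facts `C b` whose heads contain the positive body atoms `b`. -/
def resolvent (r : Rule Atom) (C : Atom → Rule Atom) : Rule Atom :=
  ⟨r.head ∪ r.bodyPos.biUnion fun b => (C b).head.erase b, ∅,
    r.bodyNeg ∪ r.bodyPos.biUnion fun b => (C b).bodyNeg⟩

lemma resolvent_mem_Lft {P : Program Atom} {r : Rule Atom} (hr : r ∈ P)
    {C : Atom → Rule Atom} (hC : ∀ b ∈ r.bodyPos, C b ∈ Lft P ∧ b ∈ (C b).head) :
    resolvent r C ∈ Lft P := by
  refine TG_Lft_subset P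
    ⟨r, hr, fun b => (C b).head.erase b, fun b => (C b).bodyNeg, fun b hb => ?_, rfl⟩
  obtain ⟨hCb, hb⟩ := hC b hb
  have hCb_eq : (⟨insert b ((C b).head.erase b), ∅, (C b).bodyNeg⟩ : Rule Atom) = C b := by
    rw [Finset.insert_erase hb, ← bodyPos_eq_empty_of_mem_Lft hCb]
  rwa [hCb_eq]

lemma Assumes.resolvent {Δ : Set (Finset Atom)} {r : Rule Atom} {C : Atom → Rule Atom}
    (hr : Assumes Δ r) (hC : ∀ b ∈ r.bodyPos, Assumes Δ (C b)) :
    Assumes Δ (resolvent r C) := by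
  intro c hc
  rcases Finset.mem_union.mp hc with hc | hc
  · exact hr c hc
  · obtain ⟨b, hb, hcb⟩ := Finset.mem_biUnion.mp hc
    exact hC b hb c hcb

lemma entails_head_of_mem_Lft {P : Program Atom} {Δ : Set (Finset Atom)} {C : Rule Atom}
    (hC : C ∈ Lft P) (hΔC : Assumes Δ C) : Entails (reduct P Δ) C.head := by
  obtain ⟨k, hk⟩ := Set.mem_iUnion.mp hC
  clear hC
  induction k generalizing C with
  | zero => simp at hk
  | succ k ih =>
    rw [Function.iterate_succ_apply'] at hk
    obtain ⟨r, hr, hf, bf, hfacts, rfl⟩ := hk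
    intro I hI
    by_cases hbody : ∀ b ∈ r.bodyPos, b ∈ I
    · obtain ⟨a, ha, haI⟩ :=
        hI _ ⟨r, hr, fun c hc => hΔC c (Finset.mem_union_left _ hc), rfl⟩ ⟨hbody, by simp⟩
      exact ⟨a, Finset.mem_union_left _ ha, haI⟩
    · obtain ⟨b, hb, hbI⟩ := not_forall₂.mp hbody
      have hΔb : Assumes Δ ⟨insert b (hf b), ∅, bf b⟩ := fun c hc =>
        hΔC c (Finset.mem_union_right _ (Finset.mem_biUnion.mpr ⟨b, hb, hc⟩))
      obtain ⟨a, ha, haI⟩ := ih hΔb (hfacts b hb) I hI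
      rcases Finset.mem_insert.mp ha with rfl | ha
      · exact absurd haI hbI
      · exact ⟨a, Finset.mem_union_right _ (Finset.mem_biUnion.mpr ⟨b, hb, ha⟩), haI⟩

def HitsHeads (N : Program Atom) (Δ : Set (Finset Atom)) (I : Finset Atom) : Prop :=
  ∀ C ∈ N, Assumes Δ C → (C.head ∩ I).Nonempty

lemma exists_head_inter_eq_singleton {N : Program Atom} {Δ : Set (Finset Atom)}
    {A I : Finset Atom} {b : Atom}
    (hI : Minimal (fun J => HitsHeads N Δ J ∧ Disjoint J A) I) (hb : b ∈ I) :
    ∃ C ∈ N, Assumes Δ C ∧ b ∈ C.head ∧ ∀ x ∈ C.head, x ∈ I → x = b := by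
  have hsmaller : ¬ HitsHeads N Δ (I.erase b) := fun h =>
    hI.not_prop_of_lt (Finset.erase_ssubset hb)
      ⟨h, hI.prop.2.mono_left (Finset.erase_subset b I)⟩
  simp only [HitsHeads, not_forall, Finset.not_nonempty_iff_eq_empty] at hsmaller
  obtain ⟨C, hC, hΔC, hempty⟩ := hsmaller
  have only_b : ∀ x ∈ C.head, x ∈ I → x = b := fun x hx hxI => by
    by_contra hxb
    simpa [hempty] using Finset.mem_inter.mpr ⟨hx, Finset.mem_erase.mpr ⟨hxb, hxI⟩⟩
  obtain ⟨x, hx⟩ := hI.prop.1 C hC hΔC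
  obtain ⟨hxC, hxI⟩ := Finset.mem_inter.mp hx
  exact ⟨C, hC, hΔC, only_b x hxC hxI ▸ hxC, only_b⟩

lemma satisfiesRule_reduct_of_minimal {P : Program Atom} {Δ : Set (Finset Atom)}
    {A I : Finset Atom} (hI : Minimal (fun J => HitsHeads (Lft P) Δ J ∧ Disjoint J A) I) :
    ∀ r' ∈ reduct P Δ, SatisfiesRule (↑I : Set Atom) r' := by
  rintro _ ⟨r, hr, hΔr, rfl⟩ ⟨hbody, -⟩
  have : Nonempty (Rule Atom) := ⟨⟨∅, ∅, ∅⟩⟩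
  choose! C hCP hΔC hbC honly using
    fun b (hb : b ∈ r.bodyPos) => exists_head_inter_eq_singleton hI (hbody hb)
  obtain ⟨x, hx⟩ := hI.prop.1 _ (resolvent_mem_Lft hr fun b hb => ⟨hCP b hb, hbC b hb⟩)
    (Assumes.resolvent hΔr hΔC)
  obtain ⟨hxhead, hxI⟩ := Finset.mem_inter.mp hx
  rcases Finset.mem_union.mp hxhead with hxr | hxC
  · exact ⟨x, hxr, hxI⟩
  · obtain ⟨b, hb, hxb⟩ := Finset.mem_biUnion.mp hxC
    exact absurd (honly b hb x (Finset.mem_of_mem_erase hxb) hxI) (Finset.ne_of_mem_erase hxb)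

variable [Fintype Atom]

lemma exists_mem_Lft_of_entails {P : Program Atom} {Δ : Set (Finset Atom)} {A : Finset Atom}
    (h : Entails (reduct P Δ) A) : ∃ C ∈ Lft P, Assumes Δ C ∧ C.head ⊆ A := by
  by_contra! hcon
  have hAc : HitsHeads (Lft P) Δ Aᶜ ∧ Disjoint Aᶜ A := by
    refine ⟨fun C hC hΔC => ?_, disjoint_compl_left⟩
    obtain ⟨x, hx, hxA⟩ := Finset.not_subset.mp (hcon C hC hΔC)
    exact ⟨x, Finset.mem_inter.mpr ⟨hx, Finset.mem_compl.mpr hxA⟩⟩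
  obtain ⟨I, hI⟩ :=
    exists_minimal_of_wellFoundedLT (fun J => HitsHeads (Lft P) Δ J ∧ Disjoint J A) ⟨Aᶜ, hAc⟩
  obtain ⟨a, haA, haI⟩ := h I (satisfiesRule_reduct_of_minimal hI)
  exact Finset.disjoint_left.mp hI.prop.2 haI haA

lemma entails_reduct_iff_exists_mem_Lft (P : Program Atom) (Δ : Set (Finset Atom))
    (A : Finset Atom) : Entails (reduct P Δ) A ↔ ∃ C ∈ Lft P, Assumes Δ C ∧ C.head ⊆ A := by
  refine ⟨exists_mem_Lft_of_entails, ?_⟩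
  rintro ⟨C, hC, hΔC, hCA⟩ I hI
  obtain ⟨a, ha, haI⟩ := entails_head_of_mem_Lft hC hΔC I hI
  exact ⟨a, hCA ha, haI⟩

lemma msState_reduct_Lft (P : Program Atom) (Δ : Set (Finset Atom)) :
    msState (reduct (Lft P) Δ) = msState (reduct P Δ) := by
  ext A
  refine and_congr_right' ?_
  rw [entails_reduct_iff_of_bodyPos_eq_empty (fun _ => bodyPos_eq_empty_of_mem_Lft),
    entails_reduct_iff_exists_mem_Lft]

end LeastFixpointTransformation

theorem supports_lft_iff_general
    {Atom : Type} [Fintype Atom] [DecidableEq Atom]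
    (P : Program Atom)
    (Δ : Set (Finset Atom))
    (α : Finset Atom) :
    Supports P Δ α ↔ Supports (Lft P) Δ α := by
  rw [Supports, Supports, msState_reduct_Lft]

/-- For any propositional disjunctive logic program `P`, any hypothesis
`Δ ⊆ DB_P^-`, and any positive disjunction `α ∈ DB_P^+`:
`Δ ⊢_P α` if and only if `Δ ⊢_{Lft(P)} α`. -/
theorem supports_lft_iff
    {Atom : Type} [Fintype Atom] [DecidableEq Atom]
    (P : Program Atom) (hP : IsProgram P)
    (Δ : Set (Finset Atom)) (hΔ : IsHyp Δ)
    (α : Finset Atom) (hα : α.Nonempty) :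
    Supports P Δ α ↔ Supports (Lft P) Δ α :=
  supports_lft_iff_general P Δ α

end DLP
end
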